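/- arXiv:2511.01228 — 2 statements merged into one kernel-verified Lean document; each statement's English description precedes it below -/
import Mathlib

section
/- Let W be a real n×n matrix and let W ⊙ W denote its entrywise (Hadamard) square, the matrix with entries (W i j)^2. Then trace(exp(W ⊙ W)) = n if and only if the support digraph of W (the directed graph on Fin n with an edge from i to j iff W i j ≠ 0) is acyclic, i.e. has no closed directed walk of positive length. -/
open NormedSpace Nat

lemma pow_entry_nonneg {n : ℕ} {Q : Matrix (Fin n) (Fin n) ℝ} (hQ : ∀ i j, 0 ≤ Q i j)
    (k : ℕ) : ∀ i j, 0 ≤ (Q ^ k) i j := by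
  induction k with
  | zero => intro i j; simp [Matrix.one_apply]; positivity
  | succ k ih =>
    intro i j
    rw [pow_succ, Matrix.mul_apply]
    exact Finset.sum_nonneg fun l _ => mul_nonneg (ih i l) (hQ l j)

lemma pow_entry_ne_iff {n : ℕ} {Q : Matrix (Fin n) (Fin n) ℝ} (hQ : ∀ i j, 0 ≤ Q i j)
    (k : ℕ) (i j : Fin n) :
    (Q ^ k) i j ≠ 0 ↔ ∃ p : Fin (k + 1) → Fin n, p 0 = i ∧ p (Fin.last k) = j ∧
      ∀ t : Fin k, Q (p t.castSucc) (p t.succ) ≠ 0 := by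
  induction k generalizing j with
  | zero =>
    simp only [pow_zero, Matrix.one_apply, ne_eq, ite_eq_right_iff, not_forall]
    constructor
    · rintro ⟨h, -⟩
      exact ⟨fun _ => i, rfl, by simp [h], fun t => t.elim0⟩
    · rintro ⟨p, h0, hl, -⟩
      refine ⟨?_, one_ne_zero⟩
      rw [← h0, ← hl]; rfl
  | succ k ih =>
    rw [pow_succ, Matrix.mul_apply]
    rw [← not_iff_not, not_ne_iff]
    rw [Finset.sum_eq_zero_iff_of_nonneg
      (fun l _ => mul_nonneg (pow_entry_nonneg hQ k i l) (hQ l j))]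
    push_neg
    constructor
    · intro h p h0 hl
      by_contra hee
      push_neg at hee
      have he : ∀ t : Fin (k+1), Q (p t.castSucc) (p t.succ) ≠ 0 := hee
      have hlast := he (Fin.last k)
      have hmid : (Q ^ k) i (p (Fin.last k).castSucc) ≠ 0 := by
        rw [ih (p (Fin.last k).castSucc)]
        refine ⟨fun s => p s.castSucc, h0, rfl, fun t => ?_⟩
        have := he t.castSucc
        rwa [Fin.succ_castSucc] at this
      have := h (p (Fin.last k).castSucc) (Finset.mem_univ _)
      rw [Fin.succ_last, hl] at hlast
      exact mul_ne_zero hmid hlast this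
    · intro h l _
      by_contra hc
      rcases mul_ne_zero_iff.mp hc with ⟨h1, h2⟩
      rcases (ih l).mp h1 with ⟨p, h0, hl, he⟩
      obtain ⟨t, ht⟩ := h (Fin.snoc p j)
        (by rw [show (0 : Fin (k+2)) = (0 : Fin (k+1)).castSucc from rfl, Fin.snoc_castSucc]
            exact h0)
        (Fin.snoc_last ..)
      revert ht
      change Q _ _ ≠ 0
      refine Fin.lastCases ?_ ?_ t
      · rw [Fin.snoc_castSucc, Fin.succ_last, Fin.snoc_last, hl]
        exact h2
      · intro s
        have e1 : (Fin.snoc p j : Fin (k+2) → Fin n) s.castSucc.castSucc = p s.castSucc :=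
          Fin.snoc_castSucc ..
        have e2 : (Fin.snoc p j : Fin (k+2) → Fin n) s.castSucc.succ = p s.succ := by
          rw [Fin.succ_castSucc]; exact Fin.snoc_castSucc ..
        rw [e1, e2]; exact he s

set_option maxHeartbeats 1000000 in
theorem stmt_1 (n : ℕ) (W : Matrix (Fin n) (Fin n) ℝ) :
    (NormedSpace.exp (Matrix.of fun i j => (W i j) ^ 2 : Matrix (Fin n) (Fin n) ℝ)).trace
        = (n : ℝ) ↔
      ¬ ∃ (k : ℕ) (p : Fin (k + 1) → Fin n), 0 < k ∧ p 0 = p (Fin.last k) ∧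
        ∀ t : Fin k, W (p t.castSucc) (p t.succ) ≠ 0 := by
  set Q : Matrix (Fin n) (Fin n) ℝ := Matrix.of fun i j => (W i j) ^ 2 with hQdef
  have hQ : ∀ i j : Fin n, 0 ≤ Q i j := fun i j => sq_nonneg _
  have hQW : ∀ i j : Fin n, Q i j ≠ 0 ↔ W i j ≠ 0 := fun i j => by
    simp [hQdef, pow_eq_zero_iff]
  have htrnn : ∀ k : ℕ, 0 ≤ (Q ^ k).trace := fun k =>
    Finset.sum_nonneg fun i _ => pow_entry_nonneg hQ k i i
  letI : SeminormedRing (Matrix (Fin n) (Fin n) ℝ) := Matrix.linftyOpSemiNormedRing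
  letI : NormedRing (Matrix (Fin n) (Fin n) ℝ) := Matrix.linftyOpNormedRing
  letI : NormedAlgebra ℝ (Matrix (Fin n) (Fin n) ℝ) := Matrix.linftyOpNormedAlgebra
  have hsum : HasSum (fun k : ℕ => (k ! : ℝ)⁻¹ • Q ^ k) (NormedSpace.exp Q) :=
    NormedSpace.exp_series_hasSum_exp' Q
  have htr : HasSum (fun k : ℕ => (k ! : ℝ)⁻¹ * (Q ^ k).trace)
      (NormedSpace.exp Q).trace := by
    have := hsum.map (Matrix.traceLinearMap (Fin n) ℝ ℝ) (continuous_id.matrix_trace)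
    convert this using 2 with k
    all_goals simp [Function.comp, Matrix.traceLinearMap, Matrix.trace_smul, smul_eq_mul]
  have key : (NormedSpace.exp Q).trace = (n : ℝ) ↔ ∀ k : ℕ, (Q ^ (k + 1)).trace = 0 := by
    have hts : Summable fun k : ℕ => (k ! : ℝ)⁻¹ * (Q ^ k).trace := htr.summable
    have hshift : Summable fun k : ℕ => ((k + 1)! : ℝ)⁻¹ * (Q ^ (k + 1)).trace :=
      hts.comp_injective (add_left_injective 1)
    have hsplit : (NormedSpace.exp Q).trace
        = (n : ℝ) + ∑' k : ℕ, ((k + 1)! : ℝ)⁻¹ * (Q ^ (k + 1)).trace := by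
      rw [← htr.tsum_eq, Summable.tsum_eq_zero_add hts]
      simp [Matrix.trace_one]
    rw [hsplit]
    constructor
    · intro h k
      have h0 : ∑' k : ℕ, ((k + 1)! : ℝ)⁻¹ * (Q ^ (k + 1)).trace = 0 := by linarith
      have hle : ((k + 1)! : ℝ)⁻¹ * (Q ^ (k + 1)).trace
          ≤ ∑' k : ℕ, ((k + 1)! : ℝ)⁻¹ * (Q ^ (k + 1)).trace :=
        Summable.le_tsum hshift k fun m _ =>
          mul_nonneg (by positivity) (htrnn _)
      have hge : 0 ≤ ((k + 1)! : ℝ)⁻¹ * (Q ^ (k + 1)).trace :=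
        mul_nonneg (by positivity) (htrnn _)
      have : ((k + 1)! : ℝ)⁻¹ * (Q ^ (k + 1)).trace = 0 := le_antisymm (h0 ▸ hle) hge
      have hfac : ((k + 1)! : ℝ)⁻¹ ≠ 0 := by positivity
      exact (mul_eq_zero.mp this).resolve_left hfac
    · intro h
      have : ∑' k : ℕ, ((k + 1)! : ℝ)⁻¹ * (Q ^ (k + 1)).trace = 0 := by
        simp [h]
      rw [this, add_zero]
  rw [key]
  constructor
  · rintro h ⟨k, p, hk, hcl, he⟩
    obtain ⟨k, rfl⟩ : ∃ m, k = m + 1 := ⟨k - 1, (Nat.succ_pred_eq_of_pos hk).symm⟩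
    have hent : (Q ^ (k + 1)) (p 0) (p 0) ≠ 0 := by
      rw [pow_entry_ne_iff hQ]
      exact ⟨p, rfl, hcl.symm, fun t => (hQW _ _).mpr (he t)⟩
    have := (Finset.sum_eq_zero_iff_of_nonneg
      (fun i _ => pow_entry_nonneg hQ (k + 1) i i)).mp (h k) (p 0) (Finset.mem_univ _)
    exact hent this
  · intro h k
    by_contra hne
    obtain ⟨i, -, hi⟩ := Finset.exists_ne_zero_of_sum_ne_zero hne
    obtain ⟨p, h0, hl, he⟩ := (pow_entry_ne_iff hQ (k + 1) i i).mp hi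
    exact h ⟨k + 1, p, Nat.succ_pos k, by rw [h0, hl],
      fun t => (hQW _ _).mp (he t)⟩
end

section
/- Let W be a real n×n matrix whose support digraph (edges i → j iff W i j ≠ 0) is acyclic, i.e. has no closed directed walk of positive length. Then trace(exp(W ⊙ W)) = n, where W ⊙ W denotes the Hadamard square of W. -/
/-- From a nonzero entry of a positive power of the Hadamard square, extract a walk
with all `W`-entries nonzero. -/
lemma stmt_3_walk (n : ℕ) (W : Matrix (Fin n) (Fin n) ℝ) :
    ∀ k (i j : Fin n),
      (((Matrix.of fun i j => (W i j) ^ 2 : Matrix (Fin n) (Fin n) ℝ)) ^ (k + 1)) i j ≠ 0 →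
      ∃ p : Fin (k + 2) → Fin n, p 0 = i ∧ p (Fin.last (k + 1)) = j ∧
        ∀ t : Fin (k + 1), W (p t.castSucc) (p t.succ) ≠ 0 := by
  intro k
  induction k with
  | zero =>
    intro i j hij
    rw [pow_one] at hij
    refine ⟨![i, j], rfl, rfl, ?_⟩
    intro t
    have ht : t = 0 := Fin.fin_one_eq_zero t
    subst ht
    simpa using fun hW => hij (by simp [hW])
  | succ k ih =>
    intro i j hij
    rw [pow_succ, Matrix.mul_apply] at hij
    obtain ⟨m, -, hm⟩ := Finset.exists_ne_zero_of_sum_ne_zero hij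
    have h1 : (((Matrix.of fun i j => (W i j) ^ 2 : Matrix (Fin n) (Fin n) ℝ)) ^ (k + 1)) i m ≠ 0 :=
      fun hz => hm (by rw [hz, zero_mul])
    have h2 : W m j ≠ 0 := by
      intro hz
      exact hm (by simp [hz])
    obtain ⟨p, hp0, hpl, hpe⟩ := ih i m h1
    refine ⟨Fin.snoc p j, ?_, ?_, ?_⟩
    · rw [show (0 : Fin (k + 3)) = Fin.castSucc 0 from rfl, Fin.snoc_castSucc, hp0]
    · exact Fin.snoc_last _ _
    · intro t
      refine Fin.lastCases ?_ ?_ t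
      · simpa [Fin.succ_last, Fin.snoc_castSucc, Fin.snoc_last, hpl] using h2
      · intro s
        beta_reduce
        rw [Fin.succ_castSucc, Fin.snoc_castSucc, Fin.snoc_castSucc]
        exact hpe s

/-- Extract a closed walk from a walk that repeats a vertex. -/
lemma stmt_3_cycle (n : ℕ) (W : Matrix (Fin n) (Fin n) ℝ) {k : ℕ}
    (p : Fin (k + 1) → Fin n) (hpe : ∀ t : Fin k, W (p t.castSucc) (p t.succ) ≠ 0)
    {a b : Fin (k + 1)} (hab : a < b) (heq : p a = p b) :
    ∃ (d : ℕ) (q : Fin (d + 1) → Fin n), 0 < d ∧ q 0 = q (Fin.last d) ∧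
      ∀ t : Fin d, W (q t.castSucc) (q t.succ) ≠ 0 := by
  have haval : (a : ℕ) < (b : ℕ) := hab
  have hbk : (b : ℕ) ≤ k := Nat.lt_succ_iff.mp b.isLt
  have hcong : ∀ (x y : Fin (k + 1)), (x : ℕ) = (y : ℕ) → p x = p y :=
    fun x y hxy => congrArg p (Fin.ext hxy)
  refine ⟨(b : ℕ) - (a : ℕ), fun t => p ⟨(a : ℕ) + (t : ℕ), by omega⟩, by omega, ?_, ?_⟩
  · have e0 : p ⟨(a : ℕ) + (((0 : Fin ((b : ℕ) - (a : ℕ) + 1))) : ℕ), by omega⟩ = p a :=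
      hcong _ _ (by simp)
    have el : p ⟨(a : ℕ) + ((Fin.last ((b : ℕ) - (a : ℕ))) : ℕ), by omega⟩ = p b :=
      hcong _ _ (by simp only [Fin.val_last]; omega)
    beta_reduce
    rw [e0, el, heq]
  · intro t
    have htb : (a : ℕ) + (t : ℕ) < (b : ℕ) := by
      have := t.isLt; omega
    have hu : (a : ℕ) + (t : ℕ) < k := by omega
    have e1 : p ⟨(a : ℕ) + ((t.castSucc : Fin ((b : ℕ) - (a : ℕ) + 1)) : ℕ), by omega⟩
        = p ((⟨(a : ℕ) + (t : ℕ), hu⟩ : Fin k).castSucc) := hcong _ _ (by simp)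
    have e2 : p ⟨(a : ℕ) + ((t.succ : Fin ((b : ℕ) - (a : ℕ) + 1)) : ℕ), by omega⟩
        = p ((⟨(a : ℕ) + (t : ℕ), hu⟩ : Fin k).succ) :=
      hcong _ _ (by simp only [Fin.val_succ]; omega)
    beta_reduce
    rw [e1, e2]
    exact hpe _

theorem stmt_3 (n : ℕ) (W : Matrix (Fin n) (Fin n) ℝ)
    (h : ¬ ∃ (k : ℕ) (p : Fin (k + 1) → Fin n), 0 < k ∧ p 0 = p (Fin.last k) ∧
      ∀ t : Fin k, W (p t.castSucc) (p t.succ) ≠ 0) :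
    (NormedSpace.exp
        (Matrix.of fun i j => (W i j) ^ 2 : Matrix (Fin n) (Fin n) ℝ)).trace = (n : ℝ) := by
  set Q : Matrix (Fin n) (Fin n) ℝ := Matrix.of fun i j => (W i j) ^ 2 with hQdef
  -- traces of positive powers vanish
  have htr : ∀ k : ℕ, (Q ^ (k + 1)).trace = 0 := by
    intro k
    by_contra htr
    obtain ⟨i, -, hi⟩ := Finset.exists_ne_zero_of_sum_ne_zero htr
    obtain ⟨p, hp0, hpl, hpe⟩ := stmt_3_walk n W k i i hi
    exact h ⟨k + 1, p, Nat.succ_pos k, hp0.trans hpl.symm, hpe⟩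
  -- Q is nilpotent: Q ^ (n + 1) = 0
  have hnil : Q ^ (n + 1) = 0 := by
    ext i j
    by_contra hij
    obtain ⟨p, hp0, hpl, hpe⟩ := stmt_3_walk n W n i j hij
    have hninj : ¬ Function.Injective p := by
      intro hinj
      have := Fintype.card_le_of_injective p hinj
      simp at this
    rw [Function.not_injective_iff] at hninj
    obtain ⟨a, b, heq, hne⟩ := hninj
    rcases hne.lt_or_gt with hab | hab
    · obtain ⟨d, q, hd, hq0, hqe⟩ := stmt_3_cycle n W p hpe hab heq
      obtain ⟨d', rfl⟩ := Nat.exists_eq_succ_of_ne_zero hd.ne'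
      exact h ⟨d' + 1, q, hd, hq0, hqe⟩
    · obtain ⟨d, q, hd, hq0, hqe⟩ := stmt_3_cycle n W p hpe hab heq.symm
      obtain ⟨d', rfl⟩ := Nat.exists_eq_succ_of_ne_zero hd.ne'
      exact h ⟨d' + 1, q, hd, hq0, hqe⟩
  have hzero : ∀ k ∉ Finset.range (n + 1),
      (((Nat.factorial k : ℝ))⁻¹ • Q ^ k : Matrix (Fin n) (Fin n) ℝ) = 0 := by
    intro k hk
    rw [Finset.mem_range, not_lt] at hk
    rw [pow_eq_zero_of_le hk hnil, smul_zero]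
  rw [NormedSpace.exp_eq_tsum ℝ]
  beta_reduce
  rw [tsum_eq_sum hzero, Matrix.trace_sum]
  rw [Finset.sum_eq_single_of_mem 0 (Finset.mem_range.mpr (Nat.succ_pos n))]
  · simp [Matrix.trace_one]
  · intro k _ hk
    obtain ⟨k', rfl⟩ := Nat.exists_eq_succ_of_ne_zero hk
    rw [Matrix.trace_smul, htr k', smul_zero]
end
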